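/- arXiv:1407.7022 — 4 statements merged into one kernel-verified Lean document; each statement's English description precedes it below -/
import Mathlib

section
/- Let Ω, Ω' be compact subsets of ℝ^d and μ a finite nonnegative measure on Ω. Let (T_n) be maps Ω → Ω' and T : Ω → Ω'. If the plans γ_{T_n} = (id × T_n)_#μ converge weakly (in duality with continuous bounded functions on Ω × Ω') to γ_T = (id × T)_#μ, then T_n → T strongly in L²(Ω, μ; ℝ^d). -/
/-!
Testing the weak convergence of the plans against (a truncation of) `(x, y) ↦ ‖y - φ x‖²`,
which is bounded on the relevant set because all maps take values in a fixed ball, gives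
`∫ ‖Tₙ - φ‖² → ∫ ‖S - φ‖²` for every bounded continuous `φ`. Choosing `φ` close to `S` in `L²`
and using `‖Tₙ - S‖² ≤ 2 (‖Tₙ - φ‖² + ‖S - φ‖²)` makes `limsup ∫ ‖Tₙ - S‖²` arbitrarily small.
-/

open MeasureTheory Filter Topology Metric BoundedContinuousFunction

lemma BoundedContinuousFunction.exists_eqOn_of_abs_le {α : Type*} [TopologicalSpace α]
    (g : C(α, ℝ)) {K : Set α} {C : ℝ} (hg : ∀ x ∈ K, |g x| ≤ C) :
    ∃ f : α →ᵇ ℝ, Set.EqOn f g K := by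
  refine ⟨.ofNormedAddCommGroup (fun x => max (-C) (min C (g x))) (by fun_prop) |C|
    fun x => abs_le.2 ⟨?_, ?_⟩, fun x hx => ?_⟩
  · exact (neg_le_neg (le_abs_self C)).trans (le_max_left _ _)
  · exact max_le (neg_le_abs C) ((min_le_left _ _).trans (le_abs_self C))
  · have h := abs_le.1 (hg x hx)
    simp [min_eq_right h.2, max_eq_right h.1]

lemma norm_sub_sq_le_two_mul {E : Type*} [SeminormedAddCommGroup E] (a b c : E) :
    ‖a - b‖ ^ 2 ≤ 2 * (‖a - c‖ ^ 2 + ‖b - c‖ ^ 2) :=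
  calc ‖a - b‖ ^ 2 ≤ (‖a - c‖ + ‖b - c‖) ^ 2 :=
        pow_le_pow_left₀ (norm_nonneg _) (norm_sub_le_norm_sub_add_norm_sub a c b |>.trans_eq
          (by rw [norm_sub_rev c b])) 2
    _ ≤ 2 * (‖a - c‖ ^ 2 + ‖b - c‖ ^ 2) := add_sq_le

namespace MeasureTheory

variable {X E : Type*} [MeasurableSpace X] {μ : Measure X} [NormedAddCommGroup E]

lemma integral_norm_sub_sq_le {f g h : X → E} (hf : MemLp f 2 μ) (hg : MemLp g 2 μ)
    (hh : MemLp h 2 μ) :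
    ∫ x, ‖f x - g x‖ ^ 2 ∂μ ≤ 2 * (∫ x, ‖f x - h x‖ ^ 2 ∂μ + ∫ x, ‖g x - h x‖ ^ 2 ∂μ) := by
  have hfh : Integrable (fun x => ‖f x - h x‖ ^ 2) μ := (hf.sub hh).integrable_norm_pow two_ne_zero
  have hgh : Integrable (fun x => ‖g x - h x‖ ^ 2) μ := (hg.sub hh).integrable_norm_pow two_ne_zero
  rw [← integral_add hfh hgh, ← integral_const_mul]
  exact integral_mono_of_nonneg (.of_forall fun x => by positivity)
    ((hfh.add hgh).const_mul 2) (.of_forall fun x => norm_sub_sq_le_two_mul _ _ _)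

lemma MemLp.exists_boundedContinuous_integral_sq_sub_le [TopologicalSpace X] [NormalSpace X]
    [BorelSpace X] [NormedSpace ℝ E] [μ.WeaklyRegular] {f : X → E} (hf : MemLp f 2 μ)
    {ε : ℝ} (hε : 0 < ε) :
    ∃ φ : X →ᵇ E, ∫ x, ‖f x - φ x‖ ^ 2 ∂μ ≤ ε ∧ MemLp φ 2 μ := by
  obtain ⟨φ, hφ, hφ2⟩ := MemLp.exists_boundedContinuous_integral_rpow_sub_le two_pos
    (by simpa using hf) hε
  exact ⟨φ, by simpa using hφ, by simpa using hφ2⟩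

section GraphPlans

variable [TopologicalSpace X]

lemma tendsto_integral_graph_of_abs_le {Y : Type*} [TopologicalSpace Y] {T : ℕ → X → Y}
    {S : X → Y} (hweak : ∀ f : X × Y →ᵇ ℝ,
      Tendsto (fun n => ∫ x, f (x, T n x) ∂μ) atTop (𝓝 (∫ x, f (x, S x) ∂μ)))
    {K : Set Y} (hT : ∀ n, ∀ᵐ x ∂μ, T n x ∈ K) (hS : ∀ᵐ x ∂μ, S x ∈ K)
    (g : C(X × Y, ℝ)) {C : ℝ} (hg : ∀ x, ∀ y ∈ K, |g (x, y)| ≤ C) :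
    Tendsto (fun n => ∫ x, g (x, T n x) ∂μ) atTop (𝓝 (∫ x, g (x, S x) ∂μ)) := by
  obtain ⟨f, hfg⟩ := BoundedContinuousFunction.exists_eqOn_of_abs_le g (K := Set.univ ×ˢ K)
    fun p hp => hg p.1 p.2 hp.2
  have hint : ∀ R : X → Y, (∀ᵐ x ∂μ, R x ∈ K) →
      ∫ x, f (x, R x) ∂μ = ∫ x, g (x, R x) ∂μ := fun R hR =>
    integral_congr_ae (hR.mono fun x hx => hfg ⟨trivial, hx⟩)
  simpa only [hint S hS, hint _ (hT _)] using hweak f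

lemma tendsto_integral_norm_graph_sub_sq {T : ℕ → X → E} {S : X → E}
    (hweak : ∀ f : X × E →ᵇ ℝ,
      Tendsto (fun n => ∫ x, f (x, T n x) ∂μ) atTop (𝓝 (∫ x, f (x, S x) ∂μ)))
    {M : ℝ} (hT : ∀ n, ∀ᵐ x ∂μ, T n x ∈ closedBall 0 M) (hS : ∀ᵐ x ∂μ, S x ∈ closedBall 0 M)
    (φ : X →ᵇ E) :
    Tendsto (fun n => ∫ x, ‖T n x - φ x‖ ^ 2 ∂μ) atTop (𝓝 (∫ x, ‖S x - φ x‖ ^ 2 ∂μ)) := by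
  refine tendsto_integral_graph_of_abs_le hweak hT hS
    ⟨fun p => ‖p.2 - φ p.1‖ ^ 2, by have := φ.continuous; fun_prop⟩ (C := (M + ‖φ‖) ^ 2)
    fun x y hy => ?_
  have hy : ‖y - φ x‖ ≤ M + ‖φ‖ :=
    (norm_sub_le _ _).trans (add_le_add (mem_closedBall_zero_iff.1 hy) (φ.norm_coe_le_norm x))
  simpa [abs_of_nonneg] using pow_le_pow_left₀ (norm_nonneg _) hy 2

theorem tendsto_integral_norm_sub_sq_of_tendsto_integral_graph [NormalSpace X] [BorelSpace X]
    [NormedSpace ℝ E] [IsFiniteMeasure μ] [μ.WeaklyRegular] {T : ℕ → X → E} {S : X → E}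
    (hTm : ∀ n, AEStronglyMeasurable (T n) μ) (hSm : AEStronglyMeasurable S μ)
    {M : ℝ} (hT : ∀ n, ∀ᵐ x ∂μ, T n x ∈ closedBall 0 M) (hS : ∀ᵐ x ∂μ, S x ∈ closedBall 0 M)
    (hweak : ∀ f : X × E →ᵇ ℝ,
      Tendsto (fun n => ∫ x, f (x, T n x) ∂μ) atTop (𝓝 (∫ x, f (x, S x) ∂μ))) :
    Tendsto (fun n => ∫ x, ‖T n x - S x‖ ^ 2 ∂μ) atTop (𝓝 0) := by
  have hL2 : ∀ {R : X → E}, AEStronglyMeasurable R μ → (∀ᵐ x ∂μ, R x ∈ closedBall 0 M) →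
      MemLp R 2 μ := fun hRm hR =>
    .of_bound hRm M (hR.mono fun x hx => mem_closedBall_zero_iff.1 hx)
  refine tendsto_order.2 ⟨fun b hb => .of_forall fun n =>
    hb.trans_le (integral_nonneg fun x => by positivity), fun ε hε => ?_⟩
  obtain ⟨φ, hSφ, hφ⟩ := (hL2 hSm hS).exists_boundedContinuous_integral_sq_sub_le
    (by positivity : 0 < ε / 8)
  have hTφ : ∀ᶠ n in atTop, ∫ x, ‖T n x - φ x‖ ^ 2 ∂μ < ε / 4 :=
    (tendsto_integral_norm_graph_sub_sq hweak hT hS φ).eventually_lt_const (by linarith)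
  filter_upwards [hTφ] with n hn
  calc ∫ x, ‖T n x - S x‖ ^ 2 ∂μ
      ≤ 2 * (∫ x, ‖T n x - φ x‖ ^ 2 ∂μ + ∫ x, ‖S x - φ x‖ ^ 2 ∂μ) :=
        integral_norm_sub_sq_le (hL2 (hTm n) (hT n)) (hL2 hSm hS) hφ
    _ < ε := by linarith

end GraphPlans

end MeasureTheory

theorem stmt0_general {d : ℕ}
    (Ω Ω' : Set (EuclideanSpace ℝ (Fin d)))
    (hΩ' : IsCompact Ω')
    (μ : Measure (EuclideanSpace ℝ (Fin d))) [IsFiniteMeasure μ]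
    (hμΩ : μ Ωᶜ = 0)
    (T : ℕ → EuclideanSpace ℝ (Fin d) → EuclideanSpace ℝ (Fin d))
    (S : EuclideanSpace ℝ (Fin d) → EuclideanSpace ℝ (Fin d))
    (hT : ∀ n, ∀ x ∈ Ω, T n x ∈ Ω') (hS : ∀ x ∈ Ω, S x ∈ Ω')
    (hTm : ∀ n, Measurable (T n)) (hSm : Measurable S)
    (hweak : ∀ f : BoundedContinuousFunction
        (EuclideanSpace ℝ (Fin d) × EuclideanSpace ℝ (Fin d)) ℝ,
      Tendsto (fun n => ∫ x, f (x, T n x) ∂μ) atTop (𝓝 (∫ x, f (x, S x) ∂μ))) :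
    Tendsto (fun n => ∫ x, ‖T n x - S x‖ ^ 2 ∂μ) atTop (𝓝 0) := by
  obtain ⟨M, hM⟩ := hΩ'.isBounded.subset_closedBall 0
  have hΩae : ∀ᵐ x ∂μ, x ∈ Ω := mem_ae_iff.2 hμΩ
  exact tendsto_integral_norm_sub_sq_of_tendsto_integral_graph
    (fun n => (hTm n).aestronglyMeasurable) hSm.aestronglyMeasurable
    (fun n => hΩae.mono fun x hx => hM (hT n x hx)) (hΩae.mono fun x hx => hM (hS x hx)) hweak

theorem stmt0 {d : ℕ}
    (Ω Ω' : Set (EuclideanSpace ℝ (Fin d)))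
    (hΩ : IsCompact Ω) (hΩ' : IsCompact Ω')
    (μ : Measure (EuclideanSpace ℝ (Fin d))) [IsFiniteMeasure μ]
    (hμΩ : μ Ωᶜ = 0)
    (T : ℕ → EuclideanSpace ℝ (Fin d) → EuclideanSpace ℝ (Fin d))
    (S : EuclideanSpace ℝ (Fin d) → EuclideanSpace ℝ (Fin d))
    (hT : ∀ n, ∀ x ∈ Ω, T n x ∈ Ω') (hS : ∀ x ∈ Ω, S x ∈ Ω')
    (hTm : ∀ n, Measurable (T n)) (hSm : Measurable S)
    (hweak : ∀ f : BoundedContinuousFunction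
        (EuclideanSpace ℝ (Fin d) × EuclideanSpace ℝ (Fin d)) ℝ,
      Tendsto (fun n => ∫ x, f (x, T n x) ∂μ) atTop (𝓝 (∫ x, f (x, S x) ∂μ))) :
    Tendsto (fun n => ∫ x, ‖T n x - S x‖ ^ 2 ∂μ) atTop (𝓝 0) :=
  stmt0_general Ω Ω' hΩ' μ hμΩ T S hT hS hTm hSm hweak
end

section
/- Let I be a bounded interval, μ an atomless probability measure on I, ν a probability measure on ℝ, and h : ℝ → ℝ convex. Then the unique nondecreasing map T : I → ℝ with T_#μ = ν minimizes ∫_I h(T(x) - x) dμ(x) among all maps S : I → ℝ with S_#μ = ν. -/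
/-!
Let `X t = sup {x ∈ [a, b] | T x ≤ t}` be the generalized inverse of `T` and `h'₊` the right
derivative of `h`. The potential `ψ y = ∫ t in 0..y, h'₊ (t - X t)` satisfies
`h (T x - x) - h (y - x) ≤ ψ (T x) - ψ y` for `x ∈ [a, b]` and every `y`: both sides are integrals
from `y` to `T x`, and by monotonicity of `h'₊` the integrand `h'₊ (t - X t)` is `≥ h'₊ (t - x)`
for `t < T x` and `≤` for `t ≥ T x`. Put `y = S x` and integrate: `ψ ∘ T` and `ψ ∘ S` have the
same law, so the right-hand side integrates to `0`. Since `ψ ∘ T` need not be integrable, this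
last step is done for `ψ` clamped to `[-N, N]`, with `N → ∞` by dominated convergence.
-/

open MeasureTheory Set Filter Topology

namespace ConvexOn

variable {f : ℝ → ℝ}

lemma monotone_rightDeriv_univ (hf : ConvexOn ℝ univ f) :
    Monotone fun x ↦ derivWithin f (Ioi x) x := by
  simpa using hf.monotoneOn_rightDeriv

lemma integral_rightDeriv_univ (hf : ConvexOn ℝ univ f) (u v : ℝ) :
    ∫ t in u..v, derivWithin f (Ioi t) t = f v - f u :=
  intervalIntegral.integral_eq_sub_of_hasDeriv_right
    ((hf.continuousOn isOpen_univ).mono (subset_univ _))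
    (fun _ _ ↦ hf.hasDerivWithinAt_rightDeriv_of_mem_interior (by simp))
    hf.monotone_rightDeriv_univ.intervalIntegrable

end ConvexOn

lemma intervalIntegral_le_of_le_of_ge {φ m : ℝ → ℝ} {y s : ℝ}
    (hφ : IntervalIntegrable φ volume y s) (hm : IntervalIntegrable m volume y s)
    (hlt : ∀ t < s, φ t ≤ m t) (hge : ∀ t, s ≤ t → m t ≤ φ t) :
    ∫ t in y..s, φ t ≤ ∫ t in y..s, m t := by
  rcases le_total y s with hys | hsy
  · exact intervalIntegral.integral_mono_on_of_le_Ioo hys hφ hm fun t ht ↦ hlt t ht.2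
  · rw [intervalIntegral.integral_symm, intervalIntegral.integral_symm s, neg_le_neg_iff]
    exact intervalIntegral.integral_mono_on hsy hm.symm hφ.symm fun t ht ↦ hge t ht.1

noncomputable def clampAt (N u : ℝ) : ℝ := max (-N) (min u N)

lemma continuous_clampAt (N : ℝ) : Continuous (clampAt N) := by
  unfold clampAt; fun_prop

lemma abs_clampAt_le {N : ℝ} (hN : 0 ≤ N) (u : ℝ) : |clampAt N u| ≤ N := by
  rw [clampAt, abs_le]; grind

lemma min_sub_zero_le_clampAt_sub (N u v : ℝ) : min (u - v) 0 ≤ clampAt N u - clampAt N v := by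
  unfold clampAt; grind

lemma eventually_clampAt_eq (u : ℝ) : ∀ᶠ N in atTop, clampAt N u = u := by
  filter_upwards [eventually_ge_atTop |u|] with N hN
  rw [abs_le] at hN
  rw [clampAt, min_eq_left hN.2, max_eq_right hN.1]

theorem integral_nonpos_of_le_sub_of_map_eq {α : Type*} [MeasurableSpace α] {μ : Measure α}
    [IsFiniteMeasure μ] {U V g : α → ℝ} (hU : AEMeasurable U μ) (hV : AEMeasurable V μ)
    (hUV : μ.map U = μ.map V) (hg : Integrable g μ) (hle : ∀ᵐ x ∂μ, g x ≤ U x - V x) :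
    ∫ x, g x ∂μ ≤ 0 := by
  have hclamp_int {W : α → ℝ} (hW : AEMeasurable W μ) (N : ℕ) :
      Integrable (fun x ↦ clampAt N (W x)) μ :=
    .of_bound ((continuous_clampAt N).measurable.comp_aemeasurable hW).aestronglyMeasurable N
      (ae_of_all _ fun x ↦ abs_clampAt_le N.cast_nonneg _)
  have hclamp_integral (N : ℕ) : ∫ x, clampAt N (U x) ∂μ = ∫ x, clampAt N (V x) ∂μ := by
    rw [← integral_map hU (continuous_clampAt N).aestronglyMeasurable,
      ← integral_map hV (continuous_clampAt N).aestronglyMeasurable, hUV]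
  set F : ℕ → α → ℝ := fun N x ↦ min (g x) (clampAt N (U x) - clampAt N (V x))
  have hF_int (N : ℕ) : Integrable (F N) μ := hg.inf ((hclamp_int hU N).sub (hclamp_int hV N))
  have hF_nonpos (N : ℕ) : ∫ x, F N x ∂μ ≤ 0 := calc
    ∫ x, F N x ∂μ ≤ ∫ x, (clampAt N (U x) - clampAt N (V x)) ∂μ :=
      integral_mono (hF_int N) ((hclamp_int hU N).sub (hclamp_int hV N)) fun _ ↦ min_le_right _ _
    _ = 0 := by rw [integral_sub (hclamp_int hU N) (hclamp_int hV N), hclamp_integral, sub_self]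
  have hF_bound (N : ℕ) : ∀ᵐ x ∂μ, ‖F N x‖ ≤ |g x| := by
    filter_upwards [hle] with x hx
    have hlow : -|g x| ≤ min (g x) 0 := le_min (neg_abs_le _) (neg_nonpos.2 (abs_nonneg _))
    rw [Real.norm_eq_abs, abs_le]
    constructor
    · exact le_min (neg_abs_le _) <| hlow.trans <|
        (min_le_min_right 0 hx).trans (min_sub_zero_le_clampAt_sub _ _ _)
    · exact (min_le_left _ _).trans (le_abs_self _)
  have hF_lim : ∀ᵐ x ∂μ, Tendsto (F · x) atTop (𝓝 (g x)) := by
    filter_upwards [hle] with x hx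
    refine tendsto_const_nhds.congr' ?_
    filter_upwards [tendsto_natCast_atTop_atTop.eventually (eventually_clampAt_eq (U x)),
      tendsto_natCast_atTop_atTop.eventually (eventually_clampAt_eq (V x))] with N hUN hVN
    simp only [F, hUN, hVN, min_eq_left hx]
  exact le_of_tendsto (tendsto_integral_of_dominated_convergence _ (fun N ↦ (hF_int N).1)
    hg.abs hF_bound hF_lim) (Eventually.of_forall hF_nonpos)

noncomputable def upperInverse (T : ℝ → ℝ) (a b t : ℝ) : ℝ :=
  sSup (insert a {x ∈ Icc a b | T x ≤ t})

section upperInverse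

variable {T : ℝ → ℝ} {a b x t : ℝ}

lemma insert_subset_Icc_upperInverse (hab : a ≤ b) (t : ℝ) :
    insert a {x ∈ Icc a b | T x ≤ t} ⊆ Icc a b :=
  insert_subset (left_mem_Icc.2 hab) (sep_subset _ _)

lemma upperInverse_mem_Icc (hab : a ≤ b) (t : ℝ) : upperInverse T a b t ∈ Icc a b :=
  ⟨le_csSup (bddAbove_Icc.mono (insert_subset_Icc_upperInverse hab t)) (mem_insert _ _),
    csSup_le (insert_nonempty _ _) fun _ hx ↦ (insert_subset_Icc_upperInverse hab t hx).2⟩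

lemma le_upperInverse (hab : a ≤ b) (hx : x ∈ Icc a b) (ht : T x ≤ t) :
    x ≤ upperInverse T a b t :=
  le_csSup (bddAbove_Icc.mono (insert_subset_Icc_upperInverse hab t))
    (mem_insert_of_mem _ ⟨hx, ht⟩)

lemma upperInverse_le (hT : MonotoneOn T (Icc a b)) (hx : x ∈ Icc a b) (ht : t < T x) :
    upperInverse T a b t ≤ x := by
  refine csSup_le (insert_nonempty _ _) ?_
  rintro y (rfl | ⟨hy, hTy⟩)
  · exact hx.1
  · by_contra! hxy
    exact (hTy.trans_lt ht).not_ge (hT hx hy hxy.le)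

lemma monotone_upperInverse (hab : a ≤ b) : Monotone (upperInverse T a b) := fun _ _ htt' ↦
  csSup_le_csSup (bddAbove_Icc.mono (insert_subset_Icc_upperInverse hab _)) (insert_nonempty _ _)
    (insert_subset_insert fun _ hx ↦ ⟨hx.1, hx.2.trans htt'⟩)

end upperInverse

noncomputable def kantorovichPotential (h T : ℝ → ℝ) (a b y : ℝ) : ℝ :=
  ∫ t in 0..y, derivWithin h (Ioi (t - upperInverse T a b t)) (t - upperInverse T a b t)

section kantorovichPotential

variable {h T : ℝ → ℝ} {a b : ℝ}

lemma intervalIntegrable_rightDeriv_sub_upperInverse (hab : a ≤ b) (hh : ConvexOn ℝ univ h)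
    (u v : ℝ) : IntervalIntegrable
      (fun t ↦ derivWithin h (Ioi (t - upperInverse T a b t)) (t - upperInverse T a b t))
      volume u v := by
  have hmono := hh.monotone_rightDeriv_univ
  have hshift (c : ℝ) : IntervalIntegrable (fun t ↦ derivWithin h (Ioi (t - c)) (t - c))
      volume u v :=
    (hmono.comp fun _ _ hst ↦ sub_le_sub_right hst c).intervalIntegrable
  simp only [intervalIntegrable_iff] at hshift ⊢
  have hmeas :=
    hmono.measurable.comp (measurable_id.sub (monotone_upperInverse (T := T) hab).measurable)
  refine integrable_of_le_of_le hmeas.aestronglyMeasurable (ae_of_all _ fun t ↦ hmono ?_)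
    (ae_of_all _ fun t ↦ hmono ?_) (hshift b) (hshift a)
  · linarith [(upperInverse_mem_Icc (T := T) hab t).2]
  · linarith [(upperInverse_mem_Icc (T := T) hab t).1]

lemma continuous_kantorovichPotential (hab : a ≤ b) (hh : ConvexOn ℝ univ h) :
    Continuous (kantorovichPotential h T a b) :=
  intervalIntegral.continuous_primitive (intervalIntegrable_rightDeriv_sub_upperInverse hab hh) 0

lemma sub_le_kantorovichPotential_sub (hab : a ≤ b) (hh : ConvexOn ℝ univ h)
    (hT : MonotoneOn T (Icc a b)) {x : ℝ} (hx : x ∈ Icc a b) (y : ℝ) :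
    h (T x - x) - h (y - x) ≤
      kantorovichPotential h T a b (T x) - kantorovichPotential h T a b y := by
  have hmono := hh.monotone_rightDeriv_univ
  have hint := intervalIntegrable_rightDeriv_sub_upperInverse (T := T) hab hh
  calc h (T x - x) - h (y - x) = ∫ t in y..T x, derivWithin h (Ioi (t - x)) (t - x) := by
        rw [intervalIntegral.integral_comp_sub_right (fun s ↦ derivWithin h (Ioi s) s),
          hh.integral_rightDeriv_univ]
    _ ≤ ∫ t in y..T x,
          derivWithin h (Ioi (t - upperInverse T a b t)) (t - upperInverse T a b t) :=
        intervalIntegral_le_of_le_of_ge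
          ((hmono.comp fun _ _ hst ↦ sub_le_sub_right hst x).intervalIntegrable) (hint _ _)
          (fun t ht ↦ hmono (by linarith [upperInverse_le hT hx ht]))
          (fun t ht ↦ hmono (by linarith [le_upperInverse hab hx ht]))
    _ = kantorovichPotential h T a b (T x) - kantorovichPotential h T a b y :=
        (intervalIntegral.integral_interval_sub_left (hint 0 _) (hint 0 _)).symm

end kantorovichPotential

theorem stmt2_general (a b : ℝ) (hab : a < b)
    (μ ν : Measure ℝ) [IsProbabilityMeasure μ]
    (hμsupp : μ (Set.Icc a b)ᶜ = 0)
    (h : ℝ → ℝ) (hconv : ConvexOn ℝ Set.univ h)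
    (T : ℝ → ℝ) (hTmono : MonotoneOn T (Set.Icc a b)) (hTm : Measurable T)
    (hTpush : Measure.map T μ = ν)
    (S : ℝ → ℝ) (hSm : Measurable S) (hSpush : Measure.map S μ = ν)
    (hTint : Integrable (fun x => h (T x - x)) μ)
    (hSint : Integrable (fun x => h (S x - x)) μ) :
    ∫ x, h (T x - x) ∂μ ≤ ∫ x, h (S x - x) ∂μ := by
  set ψ := kantorovichPotential h T a b
  have hψ : Measurable ψ := (continuous_kantorovichPotential hab.le hconv).measurable
  have hlaw : μ.map (ψ ∘ T) = μ.map (ψ ∘ S) := by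
    rw [← Measure.map_map hψ hTm, ← Measure.map_map hψ hSm, hTpush, hSpush]
  have hkey : ∀ᵐ x ∂μ, h (T x - x) - h (S x - x) ≤ ψ (T x) - ψ (S x) := by
    filter_upwards [mem_ae_iff.2 hμsupp] with x hx
    exact sub_le_kantorovichPotential_sub hab.le hconv hTmono hx (S x)
  have hgap : ∫ x, (h (T x - x) - h (S x - x)) ∂μ ≤ 0 :=
    integral_nonpos_of_le_sub_of_map_eq (hψ.comp hTm).aemeasurable (hψ.comp hSm).aemeasurable
      hlaw (hTint.sub hSint) hkey
  rw [integral_sub hTint hSint] at hgap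
  linarith

theorem stmt2 (a b : ℝ) (hab : a < b)
    (μ ν : Measure ℝ) [IsProbabilityMeasure μ] [IsProbabilityMeasure ν]
    [NullSingletonClass μ] (hμsupp : μ (Set.Icc a b)ᶜ = 0)
    (h : ℝ → ℝ) (hconv : ConvexOn ℝ Set.univ h)
    (T : ℝ → ℝ) (hTmono : MonotoneOn T (Set.Icc a b)) (hTm : Measurable T)
    (hTpush : Measure.map T μ = ν)
    (S : ℝ → ℝ) (hSm : Measurable S) (hSpush : Measure.map S μ = ν)
    (hTint : Integrable (fun x => h (T x - x)) μ)
    (hSint : Integrable (fun x => h (S x - x)) μ) :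
    ∫ x, h (T x - x) ∂μ ≤ ∫ x, h (S x - x) ∂μ :=
  stmt2_general a b hab μ ν hμsupp h hconv T hTmono hTm hTpush S hSm hSpush hTint hSint
end

section
/- Let Ω' = { (r,θ) : R₁(θ) < r < R₂(θ), 0 < θ < π/2 } in polar coordinates, with 0 < inf R₁ and R₂ bounded. For x ∈ ℝ² \ {0} write T(x) = φ(x) x/|x| + ψ(x) x^⊥/|x| with T(x) ∈ Ω'. Then for every x in the unit quarter disk, |T(x) − x| − |T(x)| + |x| ≥ A |x| ψ(x)², where A = 1 / ((2 sup R₂ + 1)(2 sup R₂)). -/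
open MeasureTheory

/-- Rotation of a planar vector by `π/2`. -/
noncomputable def perp (x : EuclideanSpace ℝ (Fin 2)) : EuclideanSpace ℝ (Fin 2) :=
  (WithLp.equiv 2 (Fin 2 → ℝ)).symm ![-(x 1), x 0]

/-!
Write `a = ‖T‖`, `b = ‖x‖`, `d = ‖T - x‖`. Since `d² - (a - b)² = 2(ab - ⟪T, x⟫)` and
`d + a - b ≤ 2a`, the triangle defect `d - a + b` controls `ab - ⟪T, x⟫`, which in turn controls
the Gram determinant `a²b² - ⟪T, x⟫²`. In the plane that determinant is `⟪T, x^⊥⟫² = b²ψ²`,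
so `b ψ² ≤ 2a²(d - a + b) ≤ 2M²(d - a + b)`, and `2M² ≤ (2M + 1)(2M)`.
-/

lemma norm_sq_mul_norm_sq_sub_inner_sq_le {E : Type*} [NormedAddCommGroup E]
    [InnerProductSpace ℝ E] (T x : E) :
    ‖T‖ ^ 2 * ‖x‖ ^ 2 - inner ℝ T x ^ 2 ≤ 2 * ‖T‖ ^ 2 * ‖x‖ * (‖T - x‖ - ‖T‖ + ‖x‖) := by
  set a := ‖T‖
  set b := ‖x‖
  set d := ‖T - x‖
  set p := inner ℝ T x
  have hd : d ^ 2 = a ^ 2 - 2 * p + b ^ 2 := norm_sub_sq_real T x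
  have hp : |p| ≤ a * b := abs_real_inner_le_norm T x
  have hdefect : 0 ≤ d - a + b := by linarith [norm_sub_norm_le T x]
  have hd_le : d ≤ a + b := norm_sub_le T x
  calc a ^ 2 * b ^ 2 - p ^ 2 = (a * b - p) * (a * b + p) := by ring
    _ ≤ (a * b - p) * (2 * (a * b)) := by
        gcongr
        · linarith [neg_abs_le p, le_abs_self p]
        · linarith [le_abs_self p]
    _ = a * b * ((d - a + b) * (d + a - b)) := by linear_combination (-(a * b)) * hd
    _ ≤ a * b * ((d - a + b) * (2 * a)) := by gcongr; linarith
    _ = 2 * a ^ 2 * b * (d - a + b) := by ring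

lemma inner_sq_add_inner_perp_sq (T x : EuclideanSpace ℝ (Fin 2)) :
    inner ℝ T x ^ 2 + inner ℝ T (perp x) ^ 2 = ‖T‖ ^ 2 * ‖x‖ ^ 2 := by
  have hperp0 : perp x 0 = -(x 1) := rfl
  have hperp1 : perp x 1 = x 0 := rfl
  simp only [← real_inner_self_eq_norm_sq, PiLp.inner_apply, Fin.sum_univ_two,
    RCLike.inner_apply, conj_trivial, hperp0, hperp1]
  ring

lemma norm_mul_inner_perp_sq_le (T x : EuclideanSpace ℝ (Fin 2)) (hx : x ≠ 0) :
    ‖x‖ * inner ℝ T (‖x‖⁻¹ • perp x) ^ 2 ≤ 2 * ‖T‖ ^ 2 * (‖T - x‖ - ‖T‖ + ‖x‖) := by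
  have hnx : 0 < ‖x‖ := norm_pos_iff.mpr hx
  have hgram := norm_sq_mul_norm_sq_sub_inner_sq_le T x
  rw [← inner_sq_add_inner_perp_sq, add_sub_cancel_left] at hgram
  calc ‖x‖ * inner ℝ T (‖x‖⁻¹ • perp x) ^ 2 = inner ℝ T (perp x) ^ 2 / ‖x‖ := by
        rw [real_inner_smul_right]; field_simp
    _ ≤ 2 * ‖T‖ ^ 2 * (‖T - x‖ - ‖T‖ + ‖x‖) := by rw [div_le_iff₀ hnx]; linarith

theorem stmt7_general (M : ℝ) (hM : 0 < M)
    (x Tx : EuclideanSpace ℝ (Fin 2)) (hx : x ≠ 0)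
    (hTx : ‖Tx‖ ≤ M)
    (ψ : ℝ)
    (hψ : ψ = inner ℝ Tx (‖x‖⁻¹ • perp x)) :
    (1 / ((2 * M + 1) * (2 * M))) * ‖x‖ * ψ ^ 2 ≤ ‖Tx - x‖ - ‖Tx‖ + ‖x‖ := by
  have hdefect : 0 ≤ ‖Tx - x‖ - ‖Tx‖ + ‖x‖ := by linarith [norm_sub_norm_le Tx x]
  have hbound : ‖x‖ * ψ ^ 2 ≤ 2 * M ^ 2 * (‖Tx - x‖ - ‖Tx‖ + ‖x‖) := by
    rw [hψ]
    refine (norm_mul_inner_perp_sq_le Tx x hx).trans ?_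
    gcongr
  rw [mul_assoc, one_div_mul_eq_div, div_le_iff₀ (by positivity)]
  linarith [mul_nonneg (mul_nonneg hM.le hM.le) hdefect, mul_nonneg hM.le hdefect]

theorem stmt7 (M : ℝ) (hM : 0 < M)
    (x Tx : EuclideanSpace ℝ (Fin 2)) (hx : x ≠ 0) (hx1 : ‖x‖ ≤ 1)
    (hTx : ‖Tx‖ ≤ M) (hTx0 : Tx ≠ 0)
    (φ ψ : ℝ)
    (hφ : φ = inner ℝ Tx (‖x‖⁻¹ • x)) (hψ : ψ = inner ℝ Tx (‖x‖⁻¹ • perp x)) :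
    (1 / ((2 * M + 1) * (2 * M))) * ‖x‖ * ψ ^ 2 ≤ ‖Tx - x‖ - ‖Tx‖ + ‖x‖ :=
  stmt7_general M hM x Tx hx hTx ψ hψ
end

section
/- Suppose (φ, ψ) ∈ H¹(0, π/2)² satisfies at each θ the constraint that the point φ(θ)x̂(θ) + ψ(θ)x̂^⊥(θ) lies in Ω' = {(r,θ') : R₁(θ') < r < R₂(θ')}, where x̂(θ) = (cos θ, sin θ), R₁ Lipschitz with inf R₁ > 0. Define h(θ) = max(R₁(θ) − φ(θ), 0). Then 0 ≤ h(θ) ≤ B₁ |ψ(θ)| for all θ, with B₁ = (π/2)(Lip R₁)/(inf R₁) + 1. -/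
/-!
Write the point as `r e^{i(θ + δ)}`, so that `φ = r cos δ` and `ψ = r sin δ` with `|δ| < π/2`.
Then `R₁ θ - φ = (R₁ θ - R₁ (θ + δ)) + (R₁ (θ + δ) - r) + r (1 - cos δ)`: the first term is at most
`L |δ| ≤ L (π/2) |sin δ| ≤ (π/2) (L / inf R₁) |ψ|` by Jordan's inequality and `r ≥ inf R₁`, the second
is negative by the constraint, and the third is at most `r |sin δ| = |ψ|`.
-/

open Real

namespace Complex

theorem re_mul_exp_neg_mul_I (w : ℂ) (θ : ℝ) :
    (w * exp (-(θ * I))).re = ‖w‖ * Real.cos (arg w - θ) := by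
  nth_rw 1 [← norm_mul_exp_arg_mul_I w]
  rw [mul_assoc, ← exp_add, ← sub_eq_add_neg, ← sub_mul, ← ofReal_sub, re_ofReal_mul,
    exp_ofReal_mul_I_re]

theorem im_mul_exp_neg_mul_I (w : ℂ) (θ : ℝ) :
    (w * exp (-(θ * I))).im = ‖w‖ * Real.sin (arg w - θ) := by
  nth_rw 1 [← norm_mul_exp_arg_mul_I w]
  rw [mul_assoc, ← exp_add, ← sub_eq_add_neg, ← sub_mul, ← ofReal_sub, im_ofReal_mul,
    exp_ofReal_mul_I_im]

end Complex

theorem Real.one_sub_cos_le_abs_sin {x : ℝ} (hx : 0 ≤ cos x) : 1 - cos x ≤ |sin x| := by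
  have h_sq : 1 - cos x ≤ sin x ^ 2 := by nlinarith [sin_sq_add_cos_sq x, cos_le_one x]
  have h_sq_le_abs : sin x ^ 2 ≤ |sin x| := by
    rw [← sq_abs]
    nlinarith [abs_nonneg (sin x), abs_sin_le_one x]
  linarith

theorem LipschitzWith.sub_mul_cos_le {f : ℝ → ℝ} {L : NNReal} (hf : LipschitzWith L f)
    {m r θ δ : ℝ} (hm : 0 < m) (hmr : m ≤ r) (hδ : |δ| ≤ π / 2) (hr : f (θ + δ) ≤ r) :
    f θ - r * cos δ ≤ (π / 2 * L / m + 1) * |r * sin δ| := by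
  have hr₀ : 0 ≤ r := hm.le.trans hmr
  have h_lip : f θ - f (θ + δ) ≤ L * |δ| := by
    simpa [Real.dist_eq, abs_sub_comm] using (le_abs_self _).trans (hf.dist_le_mul θ (θ + δ))
  have h_jordan : L * |δ| ≤ π / 2 * L / m * |r * sin δ| := by
    have h := mul_abs_le_abs_sin hδ
    rw [abs_mul, abs_of_nonneg hr₀, div_mul_eq_mul_div, le_div_iff₀ hm]
    have hπ := pi_pos
    calc L * |δ| * m = π / 2 * L * m * (2 / π * |δ|) := by field_simp
      _ ≤ π / 2 * L * r * |sin δ| := by gcongr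
      _ = π / 2 * L * (r * |sin δ|) := by ring
  have h_cos : r * (1 - cos δ) ≤ |r * sin δ| := by
    rw [abs_mul, abs_of_nonneg hr₀]
    exact mul_le_mul_of_nonneg_left
      (one_sub_cos_le_abs_sin (cos_nonneg_of_mem_Icc (abs_le.mp hδ))) hr₀
  linarith

open MeasureTheory

theorem stmt18 (R₁ R₂ : ℝ → ℝ) (L : NNReal) (hLip : LipschitzWith L R₁)
    (iR : ℝ) (hiR : 0 < iR) (hiR' : ∀ θ, iR ≤ R₁ θ)
    (φ ψ : ℝ → ℝ)
    -- the point φ(θ) x̂(θ) + ψ(θ) x̂⊥(θ) lies in Ω'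
    (hconstr : ∀ θ ∈ Set.Icc 0 (Real.pi / 2),
      0 < (↑(φ θ) * Complex.exp (↑θ * Complex.I)
            + ↑(ψ θ) * (Complex.I * Complex.exp (↑θ * Complex.I))).arg ∧
      (↑(φ θ) * Complex.exp (↑θ * Complex.I)
            + ↑(ψ θ) * (Complex.I * Complex.exp (↑θ * Complex.I))).arg < Real.pi / 2 ∧
      R₁ ((↑(φ θ) * Complex.exp (↑θ * Complex.I)
            + ↑(ψ θ) * (Complex.I * Complex.exp (↑θ * Complex.I))).arg) <
        ‖(↑(φ θ) * Complex.exp (↑θ * Complex.I)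
            + ↑(ψ θ) * (Complex.I * Complex.exp (↑θ * Complex.I)) : ℂ)‖ ∧
      ‖(↑(φ θ) * Complex.exp (↑θ * Complex.I)
            + ↑(ψ θ) * (Complex.I * Complex.exp (↑θ * Complex.I)) : ℂ)‖ <
        R₂ ((↑(φ θ) * Complex.exp (↑θ * Complex.I)
            + ↑(ψ θ) * (Complex.I * Complex.exp (↑θ * Complex.I))).arg)) :
    ∀ θ ∈ Set.Icc 0 (Real.pi / 2),
      max (R₁ θ - φ θ) 0 ≤ ((Real.pi / 2) * (L : ℝ) / iR + 1) * |ψ θ| := by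
  intro θ hθ
  obtain ⟨harg₀, harg₁, hR₁, -⟩ := hconstr θ hθ
  set w : ℂ := ↑(φ θ) * Complex.exp (↑θ * Complex.I)
    + ↑(ψ θ) * (Complex.I * Complex.exp (↑θ * Complex.I))
  have h_frame : w * Complex.exp (-(θ * Complex.I)) = φ θ + ψ θ * Complex.I := by
    simp only [w, add_mul, mul_assoc, ← Complex.exp_add, add_neg_cancel, Complex.exp_zero]
    ring
  have hφ : φ θ = ‖w‖ * cos (w.arg - θ) := by
    simpa [h_frame] using Complex.re_mul_exp_neg_mul_I w θ
  have hψ : ψ θ = ‖w‖ * sin (w.arg - θ) := by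
    simpa [h_frame] using Complex.im_mul_exp_neg_mul_I w θ
  have hδ : |w.arg - θ| ≤ π / 2 := abs_le.mpr ⟨by linarith [hθ.2], by linarith [hθ.1]⟩
  have key := hLip.sub_mul_cos_le hiR ((hiR' _).trans hR₁.le) hδ
    (by rw [add_sub_cancel]; exact hR₁.le)
  rw [← hφ, ← hψ] at key
  exact max_le key (by positivity)
end
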